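/- arXiv:math/9805125 — 2 statements merged into one kernel-verified Lean document; each statement's English description precedes it below -/
import Mathlib

section
/- Let θ ∈ ℝ and let x, y ∈ ℝ with y ≠ 0. Then A_θ(x + iy) is real if and only if cos(2πx) = −2πy / sinh(2πy). Consequently the full preimage of the real axis under A_θ consists of ℝ together with the set of points x + iy, y ≠ 0, satisfying this equation. -/
noncomputable def arnoldC (θ : ℂ) (z : ℂ) : ℂ :=
  z + θ + Complex.sin (2 * (Real.pi : ℂ) * z) / (2 * (Real.pi : ℂ))

theorem Complex.sin_im (z : ℂ) : (Complex.sin z).im = Real.cos z.re * Real.sinh z.im := by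
  rw [Complex.sin_eq]
  simp [← Complex.ofReal_cos, ← Complex.ofReal_sinh, ← Complex.ofReal_sin, ← Complex.ofReal_cosh]

theorem Real.add_mul_sinh_div_eq_zero_iff {a y c : ℝ} (ha : a ≠ 0) (hy : y ≠ 0) :
    y + c * Real.sinh (a * y) / a = 0 ↔ c = -(a * y) / Real.sinh (a * y) := by
  have hsinh : Real.sinh (a * y) ≠ 0 := Real.sinh_ne_zero.2 (mul_ne_zero ha hy)
  have hcombine : y + c * Real.sinh (a * y) / a = (c * Real.sinh (a * y) + a * y) / a := by
    field_simp
    ring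
  rw [eq_div_iff hsinh, eq_neg_iff_add_eq_zero, hcombine, div_eq_zero_iff, or_iff_left ha]

theorem arnoldC_im (θ : ℝ) (z : ℂ) :
    (arnoldC θ z).im
      = z.im + Real.cos (2 * Real.pi * z.re) * Real.sinh (2 * Real.pi * z.im) / (2 * Real.pi) := by
  have hπ : (2 * (Real.pi : ℂ)) = ((2 * Real.pi : ℝ) : ℂ) := by push_cast; ring
  rw [arnoldC, Complex.add_im, Complex.add_im, hπ, Complex.div_ofReal_im, Complex.sin_im]
  simp

theorem arnoldC_im_eq_zero_iff (θ : ℝ) {z : ℂ} (hz : z.im ≠ 0) :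
    (arnoldC θ z).im = 0 ↔
      Real.cos (2 * Real.pi * z.re) = -(2 * Real.pi * z.im) / Real.sinh (2 * Real.pi * z.im) := by
  rw [arnoldC_im]
  exact Real.add_mul_sinh_div_eq_zero_iff Real.two_pi_pos.ne' hz

/-- Let `θ ∈ ℝ` and `x, y ∈ ℝ` with `y ≠ 0`. Then `A_θ(x + iy)` is real iff
`cos(2πx) = −2πy / sinh(2πy)`. Consequently the full preimage of the real axis under
`A_θ` consists of `ℝ` together with the points `x + iy`, `y ≠ 0`, satisfying this
equation. -/
theorem arnold_preimage_real_axis (θ : ℝ) :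
    (∀ x y : ℝ, y ≠ 0 →
      ((arnoldC (θ : ℂ) ((x : ℂ) + (y : ℂ) * Complex.I)).im = 0 ↔
        Real.cos (2 * Real.pi * x) = -(2 * Real.pi * y) / Real.sinh (2 * Real.pi * y))) ∧
    (∀ z : ℂ, (arnoldC (θ : ℂ) z).im = 0 ↔
      z.im = 0 ∨ (z.im ≠ 0 ∧
        Real.cos (2 * Real.pi * z.re) = -(2 * Real.pi * z.im) / Real.sinh (2 * Real.pi * z.im))) := by
  refine ⟨fun x y hy => ?_, fun z => ?_⟩
  · simpa using arnoldC_im_eq_zero_iff θ (z := x + y * Complex.I) (by simpa using hy)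
  · rcases eq_or_ne z.im 0 with hz | hz
    · simp [arnoldC_im, hz]
    · simp [arnoldC_im_eq_zero_iff θ hz, hz]
end

section
/- A holomorphic self-map of the doubly slit plane cannot have two distinct parabolic fixed points on the slit interval: let a < b be real numbers, let Ω = ℂ \ ((−∞, a] ∪ [b, +∞)), let U ⊆ ℂ be an open set containing Ω ∪ {a, b}, and let φ : U → ℂ be holomorphic with φ(Ω) ⊆ Ω, φ([a, b]) ⊆ [a, b], φ(a) = a, φ(b) = b, φ′(a) = 1 and φ′(b) = 1. Then φ(z) = z for all z ∈ Ω. -/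
open Complex Filter Metric Set Topology
open scoped Real

/-!
`w ↦ (a + b eʷ) / (1 + eʷ)` maps the strip `|Im w| < π` onto `Ω` and `ℝ` onto `(a, b)`, so `φ`
becomes a holomorphic self-map `g` of the strip that is real on `ℝ`. The Schwarz lemma, transported
to the strip, makes `g` 1-Lipschitz on `ℝ` (the Poincaré metric of the strip is Euclidean along
`ℝ`), so the displacement `g x - x` is antitone. The parabolic fixed points force this displacement
to tend to `0` at both ends of `ℝ`, hence `g = id` on `ℝ`, `φ = id` on `(a, b)`, and `φ = id` on `Ω`
by the identity theorem.
-/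

theorem antitone_sub_self_of_lipschitzWith_one {G : ℝ → ℝ} (hG : LipschitzWith 1 G) :
    Antitone fun x => G x - x := by
  intro x y hxy
  have h := hG.dist_le_mul y x
  rw [NNReal.coe_one, one_mul, Real.dist_eq, Real.dist_eq, abs_of_nonneg (sub_nonneg.2 hxy)] at h
  linarith [le_abs_self (G y - G x)]

theorem LipschitzWith.apply_eq_self_of_tendsto_sub {G : ℝ → ℝ} (hG : LipschitzWith 1 G)
    (htop : Tendsto (fun x => G x - x) atTop (𝓝 0))
    (hbot : Tendsto (fun x => G x - x) atBot (𝓝 0)) (x : ℝ) : G x = x := by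
  have hanti := antitone_sub_self_of_lipschitzWith_one hG
  linarith [hanti.le_of_tendsto htop x, hanti.ge_of_tendsto hbot x]

theorem tendsto_sub_div_sub_of_hasDerivAt {f : ℝ → ℝ} {c : ℝ} (hf : HasDerivAt f 1 c)
    (hfc : f c = c) (d : ℝ) : Tendsto (fun t => (f t - d) / (t - d)) (𝓝[≠] c) (𝓝 1) := by
  rcases eq_or_ne d c with rfl | hdc
  · exact (hasDerivAt_iff_tendsto_slope.1 hf).congr fun t => by rw [slope_def_field, hfc]
  · have hcd : c - d ≠ 0 := sub_ne_zero.2 hdc.symm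
    have h := ((hf.continuousAt.tendsto.sub_const d).div
      (tendsto_id.sub_const d) hcd).mono_left (nhdsWithin_le_nhds (s := {c}ᶜ))
    rwa [hfc, div_self hcd] at h

noncomputable def intervalLogit (a b t : ℝ) : ℝ := Real.log ((t - a) / (b - t))

noncomputable def intervalSigmoid (a b x : ℝ) : ℝ := a + (b - a) * Real.sigmoid x

section Interval

variable {a b : ℝ}

theorem intervalSigmoid_mem_Ioo (hab : a < b) (x : ℝ) : intervalSigmoid a b x ∈ Ioo a b := by
  have h0 := Real.sigmoid_pos x
  have h1 := Real.sigmoid_lt_one x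
  constructor <;> unfold intervalSigmoid <;> nlinarith

theorem intervalLogit_intervalSigmoid (hab : a < b) (x : ℝ) :
    intervalLogit a b (intervalSigmoid a b x) = x := by
  have h := Real.sigmoid_mul_rexp_neg x
  rw [Real.sigmoid_neg] at h
  have hba : b - a ≠ 0 := (sub_pos.2 hab).ne'
  rw [intervalLogit, intervalSigmoid,
    show a + (b - a) * x.sigmoid - a = (b - a) * x.sigmoid by ring,
    show b - (a + (b - a) * x.sigmoid) = (b - a) * (1 - x.sigmoid) by ring,
    mul_div_mul_left _ _ hba, ← h, div_mul_cancel_left₀ (Real.sigmoid_pos x).ne',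
    Real.log_inv, Real.log_exp, neg_neg]

theorem intervalSigmoid_intervalLogit {t : ℝ} (ht : t ∈ Ioo a b) :
    intervalSigmoid a b (intervalLogit a b t) = t := by
  have hta : 0 < t - a := sub_pos.2 ht.1
  have hbt : 0 < b - t := sub_pos.2 ht.2
  rw [intervalSigmoid, intervalLogit, Real.sigmoid_def, Real.exp_neg,
    Real.exp_log (div_pos hta hbt)]
  field_simp
  ring

theorem tendsto_intervalSigmoid_atTop (hab : a < b) :
    Tendsto (intervalSigmoid a b) atTop (𝓝[Ioo a b] b) := by
  refine tendsto_nhdsWithin_iff.2 ⟨?_, .of_forall (intervalSigmoid_mem_Ioo hab)⟩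
  have h := (Real.tendsto_sigmoid_atTop.const_mul (b - a)).const_add a
  rwa [mul_one, add_sub_cancel] at h

theorem tendsto_intervalSigmoid_atBot (hab : a < b) :
    Tendsto (intervalSigmoid a b) atBot (𝓝[Ioo a b] a) := by
  refine tendsto_nhdsWithin_iff.2 ⟨?_, .of_forall (intervalSigmoid_mem_Ioo hab)⟩
  have h := (Real.tendsto_sigmoid_atBot.const_mul (b - a)).const_add a
  rwa [mul_zero, add_zero] at h

theorem intervalLogit_sub_intervalLogit {s t : ℝ} (hs : s ∈ Ioo a b) (ht : t ∈ Ioo a b) :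
    intervalLogit a b s - intervalLogit a b t
      = Real.log ((s - a) / (t - a)) - Real.log ((s - b) / (t - b)) := by
  have h₁ : s - a ≠ 0 := (sub_pos.2 hs.1).ne'
  have h₂ : t - a ≠ 0 := (sub_pos.2 ht.1).ne'
  have h₃ : b - s ≠ 0 := (sub_pos.2 hs.2).ne'
  have h₄ : b - t ≠ 0 := (sub_pos.2 ht.2).ne'
  rw [intervalLogit, intervalLogit, Real.log_div h₁ h₃, Real.log_div h₂ h₄, Real.log_div h₁ h₂,
    ← neg_sub b s, ← neg_sub b t, Real.log_div (neg_ne_zero.2 h₃) (neg_ne_zero.2 h₄),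
    Real.log_neg_eq_log, Real.log_neg_eq_log]
  ring

theorem tendsto_intervalLogit_sub {f : ℝ → ℝ} {c : ℝ} (hc : c ∉ Ioo a b)
    (hmaps : MapsTo f (Ioo a b) (Ioo a b)) (hf : HasDerivAt f 1 c) (hfc : f c = c) :
    Tendsto (fun t => intervalLogit a b (f t) - intervalLogit a b t) (𝓝[Ioo a b] c) (𝓝 0) := by
  have hle : 𝓝[Ioo a b] c ≤ 𝓝[≠] c :=
    nhdsWithin_mono _ fun t ht (htc : t = c) => hc (htc ▸ ht)
  have hlog : ∀ d, Tendsto (fun t => Real.log ((f t - d) / (t - d))) (𝓝[Ioo a b] c) (𝓝 0) :=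
    fun d => by
      simpa [Function.comp_def] using ((Real.continuousAt_log one_ne_zero).tendsto.comp
        (tendsto_sub_div_sub_of_hasDerivAt hf hfc d)).mono_left hle
  rw [← sub_zero (0 : ℝ)]
  refine ((hlog a).sub (hlog b)).congr' ?_
  filter_upwards [self_mem_nhdsWithin] with t ht
  exact (intervalLogit_sub_intervalLogit (hmaps ht) ht).symm

theorem eqOn_Ioo_of_lipschitzWith_intervalLogit (hab : a < b) {f : ℝ → ℝ}
    (hmaps : MapsTo f (Ioo a b) (Ioo a b)) (ha : HasDerivAt f 1 a) (hb : HasDerivAt f 1 b)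
    (hfa : f a = a) (hfb : f b = b)
    (hlip : LipschitzWith 1 fun x => intervalLogit a b (f (intervalSigmoid a b x))) :
    EqOn f id (Ioo a b) := by
  have hsub : ∀ x, intervalLogit a b (f (intervalSigmoid a b x)) - x
      = intervalLogit a b (f (intervalSigmoid a b x))
        - intervalLogit a b (intervalSigmoid a b x) := fun x => by
    rw [intervalLogit_intervalSigmoid hab]
  have htop := ((tendsto_intervalLogit_sub (fun h => h.2.false) hmaps hb hfb).comp
    (tendsto_intervalSigmoid_atTop hab)).congr fun x => (hsub x).symm
  have hbot := ((tendsto_intervalLogit_sub (fun h => h.1.false) hmaps ha hfa).comp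
    (tendsto_intervalSigmoid_atBot hab)).congr fun x => (hsub x).symm
  intro t ht
  have hfix := hlip.apply_eq_self_of_tendsto_sub htop hbot (intervalLogit a b t)
  rw [intervalSigmoid_intervalLogit ht] at hfix
  calc f t = intervalSigmoid a b (intervalLogit a b (f t)) :=
        (intervalSigmoid_intervalLogit (hmaps ht)).symm
    _ = t := by rw [hfix, intervalSigmoid_intervalLogit ht]

end Interval

def strip : Set ℂ := {w | w.im ∈ Ioo (-π) π}

noncomputable def stripToDisc (w : ℂ) : ℂ := (exp (w / 2) - 1) / (exp (w / 2) + 1)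

noncomputable def discToStrip (z : ℂ) : ℂ := 2 * log ((1 + z) / (1 - z))

theorem ofReal_mem_strip (x : ℝ) : (x : ℂ) ∈ strip := by
  simp [strip, Real.pi_pos]

theorem re_exp_half_pos {w : ℂ} (hw : w ∈ strip) : 0 < (exp (w / 2)).re := by
  rw [exp_re]
  refine mul_pos (Real.exp_pos _) (Real.cos_pos_of_mem_Ioo ?_)
  obtain ⟨h1, h2⟩ := hw
  constructor <;> simp <;> linarith

theorem norm_sub_one_lt_norm_add_one {u : ℂ} (hu : 0 < u.re) : ‖u - 1‖ < ‖u + 1‖ := by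
  rw [← sq_lt_sq₀ (norm_nonneg _) (norm_nonneg _), Complex.sq_norm, Complex.sq_norm,
    normSq_apply, normSq_apply]
  simp only [sub_re, sub_im, add_re, add_im, one_re, one_im]
  nlinarith

theorem re_one_add_div_one_sub_pos {z : ℂ} (hz : ‖z‖ < 1) : 0 < ((1 + z) / (1 - z)).re := by
  have hz1 : 1 - z ≠ 0 := sub_ne_zero.2 fun h => by simp [← h] at hz
  have hsq : z.re ^ 2 + z.im ^ 2 < 1 := by
    have h := Complex.sq_norm z
    rw [normSq_apply] at h
    nlinarith [norm_nonneg z]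
  rw [div_re, ← add_div]
  refine div_pos ?_ (normSq_pos.2 hz1)
  simp only [add_re, add_im, sub_re, sub_im, one_re, one_im]
  nlinarith

theorem exp_half_add_one_ne_zero {w : ℂ} (hw : w ∈ strip) : exp (w / 2) + 1 ≠ 0 := fun h => by
  have h' := re_exp_half_pos hw
  rw [eq_neg_of_add_eq_zero_left h, neg_re, one_re] at h'
  norm_num at h'

theorem stripToDisc_mem_ball {w : ℂ} (hw : w ∈ strip) : stripToDisc w ∈ ball (0 : ℂ) 1 := by
  have h := norm_sub_one_lt_norm_add_one (re_exp_half_pos hw)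
  rw [mem_ball_zero_iff, stripToDisc, norm_div, div_lt_one ((norm_nonneg _).trans_lt h)]
  exact h

theorem discToStrip_mem_strip {z : ℂ} (hz : z ∈ ball (0 : ℂ) 1) : discToStrip z ∈ strip := by
  have h := abs_lt.1 (abs_arg_lt_pi_div_two_iff.2
    (Or.inl (re_one_add_div_one_sub_pos (mem_ball_zero_iff.1 hz))))
  have him : (discToStrip z).im = 2 * arg ((1 + z) / (1 - z)) := by simp [discToStrip, log_im]
  constructor <;> rw [him] <;> linarith [h.1, h.2]

theorem discToStrip_stripToDisc {w : ℂ} (hw : w ∈ strip) : discToStrip (stripToDisc w) = w := by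
  have hne := exp_half_add_one_ne_zero hw
  have hexp : (1 + stripToDisc w) / (1 - stripToDisc w) = exp (w / 2) := by
    rw [stripToDisc]
    field_simp
    ring
  have him : (w / 2).im = w.im / 2 := by simp
  rw [discToStrip, hexp, log_exp (by rw [him]; linarith [hw.1, Real.pi_pos])
    (by rw [him]; linarith [hw.2, Real.pi_pos])]
  ring

theorem differentiableOn_stripToDisc : DifferentiableOn ℂ stripToDisc strip := fun w hw => by
  have hexp : DifferentiableAt ℂ (fun w : ℂ => exp (w / 2)) w := by fun_prop
  exact ((hexp.sub_const 1).div (hexp.add_const 1)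
    (exp_half_add_one_ne_zero hw)).differentiableWithinAt

theorem differentiableOn_discToStrip : DifferentiableOn ℂ discToStrip (ball 0 1) := fun z hz => by
  have hz' := mem_ball_zero_iff.1 hz
  have hz1 : 1 - z ≠ 0 := sub_ne_zero.2 fun h => by simp [← h] at hz'
  have hq : DifferentiableAt ℂ (fun z : ℂ => (1 + z) / (1 - z)) z :=
    ((differentiableAt_const 1).add differentiableAt_id).div
      ((differentiableAt_const 1).sub differentiableAt_id) hz1
  exact ((hq.clog (Or.inl (re_one_add_div_one_sub_pos hz'))).const_mul 2).differentiableWithinAt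

theorem norm_stripToDisc_le {h : ℂ → ℂ} (hd : DifferentiableOn ℂ h strip)
    (hmaps : MapsTo h strip strip) (h0 : h 0 = 0) {w : ℂ} (hw : w ∈ strip) :
    ‖stripToDisc (h w)‖ ≤ ‖stripToDisc w‖ := by
  have hA : MapsTo discToStrip (ball 0 1) strip := fun z hz => discToStrip_mem_strip hz
  have hE : MapsTo stripToDisc strip (ball 0 1) := fun w hw => stripToDisc_mem_ball hw
  have hschwarz := Complex.norm_le_norm_of_mapsTo_ball (z := stripToDisc w)
    (differentiableOn_stripToDisc.comp (hd.comp differentiableOn_discToStrip hA) (hmaps.comp hA))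
    ((hE.comp (hmaps.comp hA)).mono_right ball_subset_closedBall)
    (by simp [discToStrip, h0, stripToDisc]) (mem_ball_zero_iff.1 (stripToDisc_mem_ball hw))
  rwa [Function.comp_apply, Function.comp_apply, discToStrip_stripToDisc hw] at hschwarz

theorem abs_two_mul_sigmoid_sub_one (x : ℝ) :
    |2 * Real.sigmoid x - 1| = 2 * Real.sigmoid |x| - 1 := by
  have h0 : Real.sigmoid 0 = 2⁻¹ := Real.sigmoid_zero
  rcases le_or_gt 0 x with hx | hx
  · have := Real.sigmoid_le hx
    rw [abs_of_nonneg hx, abs_of_nonneg (by linarith)]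
  · have := Real.sigmoid_lt hx
    rw [abs_of_neg hx, abs_of_neg (by linarith), Real.sigmoid_neg]
    ring

theorem norm_stripToDisc_ofReal (t : ℝ) :
    ‖stripToDisc t‖ = 2 * Real.sigmoid (|t| / 2) - 1 := by
  have hreal : stripToDisc t = ((2 * Real.sigmoid (t / 2) - 1 : ℝ) : ℂ) := by
    have hr : 2 * Real.sigmoid (t / 2) - 1 = (Real.exp (t / 2) - 1) / (Real.exp (t / 2) + 1) := by
      rw [Real.sigmoid_def, Real.exp_neg]
      field_simp
      ring
    simp only [stripToDisc, hr, ofReal_div, ofReal_sub, ofReal_add, ofReal_exp, ofReal_one,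
      ofReal_ofNat]
  rw [hreal, norm_real, Real.norm_eq_abs, abs_two_mul_sigmoid_sub_one, abs_div, abs_two]

theorem abs_le_abs_of_norm_stripToDisc_le {s t : ℝ} (h : ‖stripToDisc s‖ ≤ ‖stripToDisc t‖) :
    |s| ≤ |t| := by
  rw [norm_stripToDisc_ofReal, norm_stripToDisc_ofReal] at h
  have hσ : Real.sigmoid (|s| / 2) ≤ Real.sigmoid (|t| / 2) := by linarith
  linarith [Real.sigmoid_le_iff.1 hσ]

theorem lipschitzWith_re_of_mapsTo_strip {g : ℂ → ℂ} (hd : DifferentiableOn ℂ g strip)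
    (hmaps : MapsTo g strip strip) (hreal : ∀ x : ℝ, (g x).im = 0) :
    LipschitzWith 1 fun x : ℝ => (g x).re := by
  refine LipschitzWith.of_dist_le_mul fun x y => ?_
  have htrans : MapsTo (fun w : ℂ => y + w) strip strip := fun w hw => by simpa [strip] using hw
  have hshift : MapsTo (fun w : ℂ => g (y + w) - g y) strip strip := fun w hw => by
    simpa [strip, hreal y] using hmaps (htrans hw)
  have h := norm_stripToDisc_le (h := fun w : ℂ => g (y + w) - g y)
    ((hd.comp (differentiableOn_const _ |>.add differentiableOn_id) htrans).sub_const _)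
    hshift (by simp) (ofReal_mem_strip (x - y))
  have hgxy : g (↑y + ↑(x - y)) - g y = ((g x).re - (g y).re : ℝ) := by
    apply Complex.ext <;> simp [hreal x, hreal y]
  rw [hgxy] at h
  simpa [Real.dist_eq] using abs_le_abs_of_norm_stripToDisc_le h

def slitDomain (a b : ℝ) : Set ℂ := {z | z.im ≠ 0 ∨ (a < z.re ∧ z.re < b)}

noncomputable def stripToSlitDomain (a b : ℝ) (w : ℂ) : ℂ := (a + b * exp w) / (1 + exp w)

noncomputable def slitDomainToStrip (a b : ℝ) (z : ℂ) : ℂ := log ((z - a) / (b - z))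

section SlitDomain

variable {a b : ℝ}

theorem ofReal_mem_slitDomain {t : ℝ} : (t : ℂ) ∈ slitDomain a b ↔ t ∈ Ioo a b := by
  simp [slitDomain]

theorem mem_slitDomain_iff (hab : a < b) {z : ℂ} :
    z ∈ slitDomain a b ↔ (z - a) / (b - z) ∈ slitPlane := by
  rcases eq_or_ne z b with rfl | hzb
  · -- the quotient is the junk value `(b - a) / 0 = 0`, which is not in `slitPlane`
    simp [slitDomain, zero_notMem_slitPlane]
  have hn : 0 < normSq (b - z) := normSq_pos.2 (sub_ne_zero.2 hzb.symm)
  have hre : ((z - a) / (b - z)).re = ((z.re - a) * (b - z.re) - z.im ^ 2) / normSq (b - z) := by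
    rw [div_re, ← add_div]
    congr 1
    simp only [sub_re, sub_im, ofReal_re, ofReal_im]
    ring
  have him : ((z - a) / (b - z)).im = z.im * (b - a) / normSq (b - z) := by
    rw [div_im, div_sub_div_same]
    congr 1
    simp only [sub_re, sub_im, ofReal_re, ofReal_im]
    ring
  rw [mem_slitPlane_iff, hre, him, div_pos_iff_of_pos_right hn, slitDomain, mem_ofPred_eq]
  by_cases h0 : z.im = 0
  · simp only [h0, ne_eq, not_true_eq_false, false_or, zero_mul, zero_div, or_false]
    constructor
    · rintro ⟨h1, h2⟩
      nlinarith
    · intro h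
      by_contra! hc
      by_cases h1 : a < z.re
      · nlinarith [hc h1]
      · nlinarith
  · have : z.im * (b - a) / normSq (b - z) ≠ 0 :=
      div_ne_zero (mul_ne_zero h0 (by linarith)) hn.ne'
    tauto

theorem exp_mem_slitPlane_of_mem_strip {w : ℂ} (hw : w ∈ strip) : exp w ∈ slitPlane := by
  rw [exp_mem_slitPlane, (toIocMod_eq_self _).2 ⟨hw.1, by linarith [hw.2]⟩]
  exact hw.2.ne

theorem one_add_exp_ne_zero {w : ℂ} (hw : w ∈ strip) : 1 + exp w ≠ 0 := fun h => by
  have := exp_mem_slitPlane_of_mem_strip hw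
  rw [eq_neg_of_add_eq_zero_right h] at this
  norm_num [mem_slitPlane_iff] at this

theorem stripToSlitDomain_ratio (hab : a < b) {w : ℂ} (hw : w ∈ strip) :
    (stripToSlitDomain a b w - a) / (b - stripToSlitDomain a b w) = exp w := by
  have hd := one_add_exp_ne_zero hw
  have hba : (b : ℂ) - a ≠ 0 := sub_ne_zero.2 (ofReal_injective.ne hab.ne')
  have hnum : stripToSlitDomain a b w - a = (b - a) * exp w / (1 + exp w) := by
    rw [stripToSlitDomain]; field_simp; ring
  have hden : b - stripToSlitDomain a b w = (b - a) / (1 + exp w) := by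
    rw [stripToSlitDomain]; field_simp; ring
  rw [hnum, hden, div_div_div_cancel_right₀ hd, mul_div_cancel_left₀ _ hba]

theorem mapsTo_stripToSlitDomain (hab : a < b) :
    MapsTo (stripToSlitDomain a b) strip (slitDomain a b) := fun w hw => by
  rw [mem_slitDomain_iff hab, stripToSlitDomain_ratio hab hw]
  exact exp_mem_slitPlane_of_mem_strip hw

theorem mapsTo_slitDomainToStrip (hab : a < b) :
    MapsTo (slitDomainToStrip a b) (slitDomain a b) strip := fun z hz => by
  rw [mem_slitDomain_iff hab, mem_slitPlane_iff_arg] at hz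
  exact ⟨by simpa [slitDomainToStrip, log_im] using neg_pi_lt_arg _,
    by simpa [slitDomainToStrip, log_im] using (arg_le_pi _).lt_of_ne hz.1⟩

theorem differentiableOn_stripToSlitDomain :
    DifferentiableOn ℂ (stripToSlitDomain a b) strip := fun w hw => by
  have hexp : DifferentiableAt ℂ exp w := Complex.differentiable_exp w
  exact (((hexp.const_mul _).const_add _).div (hexp.const_add 1)
    (one_add_exp_ne_zero hw)).differentiableWithinAt

theorem differentiableOn_slitDomainToStrip (hab : a < b) :
    DifferentiableOn ℂ (slitDomainToStrip a b) (slitDomain a b) := fun z hz => by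
  rw [mem_slitDomain_iff hab] at hz
  have hbz : (b : ℂ) - z ≠ 0 := fun h => zero_notMem_slitPlane (by simp [h] at hz)
  have hq : DifferentiableAt ℂ (fun z : ℂ => (z - a) / (b - z)) z :=
    (differentiableAt_id.sub_const _).div ((differentiableAt_const _).sub differentiableAt_id) hbz
  exact (hq.clog hz).differentiableWithinAt

theorem stripToSlitDomain_ofReal (x : ℝ) :
    stripToSlitDomain a b x = intervalSigmoid a b x := by
  have hr : intervalSigmoid a b x = (a + b * Real.exp x) / (1 + Real.exp x) := by
    rw [intervalSigmoid, Real.sigmoid_def, Real.exp_neg]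
    field_simp
    ring
  simp only [stripToSlitDomain, hr, ofReal_div, ofReal_add, ofReal_mul, ofReal_exp, ofReal_one]

theorem slitDomainToStrip_ofReal {t : ℝ} (ht : t ∈ Ioo a b) :
    slitDomainToStrip a b t = intervalLogit a b t := by
  rw [slitDomainToStrip, intervalLogit,
    ofReal_log (div_pos (sub_pos.2 ht.1) (sub_pos.2 ht.2)).le]
  push_cast
  rfl

theorem mapsTo_re_Ioo_of_mapsTo_slitDomain {φ : ℂ → ℂ}
    (hmaps : MapsTo φ (slitDomain a b) (slitDomain a b))
    (hreal : ∀ t ∈ Ioo a b, φ t = ((φ t).re : ℂ)) :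
    MapsTo (fun t : ℝ => (φ t).re) (Ioo a b) (Ioo a b) := fun t ht =>
  ofReal_mem_slitDomain.1 (hreal t ht ▸ hmaps (ofReal_mem_slitDomain.2 ht))

theorem lipschitzWith_intervalLogit_re_comp (hab : a < b) {φ : ℂ → ℂ}
    (hd : DifferentiableOn ℂ φ (slitDomain a b))
    (hmaps : MapsTo φ (slitDomain a b) (slitDomain a b))
    (hreal : ∀ t ∈ Ioo a b, φ t = ((φ t).re : ℂ)) :
    LipschitzWith 1 fun x => intervalLogit a b ((φ (intervalSigmoid a b x)).re) := by
  set g := slitDomainToStrip a b ∘ φ ∘ stripToSlitDomain a b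
  have hΨ := mapsTo_stripToSlitDomain hab
  have hg : ∀ x : ℝ, g x = intervalLogit a b ((φ (intervalSigmoid a b x)).re) := fun x => by
    have ht := intervalSigmoid_mem_Ioo hab x
    simp only [g, Function.comp_apply, stripToSlitDomain_ofReal]
    conv_lhs => rw [hreal _ ht]
    exact slitDomainToStrip_ofReal (mapsTo_re_Ioo_of_mapsTo_slitDomain hmaps hreal ht)
  have hlip := lipschitzWith_re_of_mapsTo_strip (g := g)
    ((differentiableOn_slitDomainToStrip hab).comp
      (hd.comp differentiableOn_stripToSlitDomain hΨ) (hmaps.comp hΨ))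
    ((mapsTo_slitDomainToStrip hab).comp (hmaps.comp hΨ))
    (fun x => by rw [hg, ofReal_im])
  simpa only [hg, ofReal_re] using hlip

theorem starConvex_slitDomain {m : ℝ} (hm : m ∈ Ioo a b) :
    StarConvex ℝ (m : ℂ) (slitDomain a b) := by
  intro z hz s t hs ht hst
  simp only [slitDomain, mem_ofPred_eq, add_im, add_re, smul_re, smul_im, ofReal_re, ofReal_im,
    smul_eq_mul, mul_zero, zero_add]
  rcases ht.eq_or_lt with rfl | htpos
  · right
    rw [add_zero] at hst
    simp [hst, hm.1, hm.2]
  rcases hz with him | ⟨h1, h2⟩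
  · exact Or.inl (mul_ne_zero htpos.ne' him)
  · right
    have ha : a = s * a + t * a := by rw [← add_mul, hst, one_mul]
    have hb : b = s * b + t * b := by rw [← add_mul, hst, one_mul]
    constructor
    · linarith [mul_le_mul_of_nonneg_left hm.1.le hs, mul_lt_mul_of_pos_left h1 htpos]
    · linarith [mul_le_mul_of_nonneg_left hm.2.le hs, mul_lt_mul_of_pos_left h2 htpos]

theorem AnalyticOnNhd.eqOn_slitDomain_of_eqOn_Ioo (hab : a < b) {f g : ℂ → ℂ}
    (hf : AnalyticOnNhd ℂ f (slitDomain a b)) (hg : AnalyticOnNhd ℂ g (slitDomain a b))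
    (hfg : ∀ t ∈ Ioo a b, f t = g t) : EqOn f g (slitDomain a b) := by
  have hm : (a + b) / 2 ∈ Ioo a b := ⟨by linarith, by linarith⟩
  have hpre : IsPreconnected (slitDomain a b) :=
    ((starConvex_slitDomain hm).isPathConnected
      (ofReal_mem_slitDomain.2 hm)).isConnected.isPreconnected
  have hofReal :
      Tendsto ((↑) : ℝ → ℂ) (𝓝[≠] ((a + b) / 2)) (𝓝[≠] (((a + b) / 2 : ℝ) : ℂ)) :=
    continuous_ofReal.continuousWithinAt.tendsto_nhdsWithin fun t ht h => ht (ofReal_injective h)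
  have hev : ∀ᶠ t : ℝ in 𝓝[≠] ((a + b) / 2), f t = g t :=
    eventually_nhdsWithin_of_eventually_nhds (eventually_of_mem (Ioo_mem_nhds hm.1 hm.2) hfg)
  exact hf.eqOn_of_preconnected_of_frequently_eq hg hpre (ofReal_mem_slitDomain.2 hm)
    (hofReal.frequently hev.frequently)

end SlitDomain

/-- A holomorphic self-map of the doubly slit plane
`Ω = ℂ \ ((−∞, a] ∪ [b, +∞))` fixing `a` and `b` with derivative `1` at both,
and preserving the interval `[a, b]`, must be the identity on `Ω`. -/
theorem slit_plane_two_parabolic_fixed_points (a b : ℝ) (hab : a < b)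
    (Ω : Set ℂ) (hΩ : Ω = {z : ℂ | z.im ≠ 0 ∨ (a < z.re ∧ z.re < b)})
    (U : Set ℂ) (hU : IsOpen U) (hUΩ : Ω ∪ {(a : ℂ), (b : ℂ)} ⊆ U)
    (φ : ℂ → ℂ) (hφ : DifferentiableOn ℂ φ U)
    (hmaps : Set.MapsTo φ Ω Ω)
    (hseg : Set.MapsTo φ ((fun x : ℝ => (x : ℂ)) '' Set.Icc a b)
      ((fun x : ℝ => (x : ℂ)) '' Set.Icc a b))
    (hfa : φ (a : ℂ) = (a : ℂ)) (hfb : φ (b : ℂ) = (b : ℂ))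
    (hda : deriv φ (a : ℂ) = 1) (hdb : deriv φ (b : ℂ) = 1) :
    ∀ z ∈ Ω, φ z = z := by
  obtain rfl : Ω = slitDomain a b := hΩ
  have hΩU : slitDomain a b ⊆ U := subset_union_left.trans hUΩ
  have hreal : ∀ t ∈ Ioo a b, φ t = ((φ t).re : ℂ) := fun t ht => by
    obtain ⟨u, -, hu⟩ := hseg (mem_image_of_mem _ (Ioo_subset_Icc_self ht))
    rw [← hu, ofReal_re]
  have hderiv : ∀ c : ℝ, (c : ℂ) ∈ U → deriv φ c = 1 →
      HasDerivAt (fun t : ℝ => (φ t).re) 1 c := fun c hc h1 => by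
    simpa [h1] using (hφ.differentiableAt (hU.mem_nhds hc)).hasDerivAt.real_of_complex
  have hfix := eqOn_Ioo_of_lipschitzWith_intervalLogit hab
    (mapsTo_re_Ioo_of_mapsTo_slitDomain hmaps hreal)
    (hderiv a (hUΩ (by simp)) hda) (hderiv b (hUΩ (by simp)) hdb) (by simp [hfa]) (by simp [hfb])
    (lipschitzWith_intervalLogit_re_comp hab (hφ.mono hΩU) hmaps hreal)
  exact ((hφ.analyticOnNhd hU).mono hΩU).eqOn_slitDomain_of_eqOn_Ioo hab analyticOnNhd_id
    fun t ht => (hreal t ht).trans (congrArg _ (hfix ht))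
end
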